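/- arXiv:1905.04438 — 2 statements merged into one kernel-verified Lean document; each statement's English description precedes it below -/
import Mathlib

section
/- In the Ranking preference model, a lottery Δ over committees of size K is stable if and only if it is 1-stable; i.e., if E_{S∼Δ}[V(S,{j})] < n/K for every single candidate j, then E_{S∼Δ}[V(S,S')] < (|S'|/K)·n for every nonempty committee S' of size at most K. -/
/-! A voter prefers `S'` to `S` exactly when she prefers some single `j ∈ S'` to `S`, so
`V(S,S') ≤ ∑_{j ∈ S'} V(S,{j})`. Averaging over `S ∼ Δ`, 1-stability bounds the right-hand side
by `|S'| · n / K`; conversely 1-stability is the case `S' = {j}` of stability. -/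

/-- Ranking preference: some member of `S₂` beats every member of `S₁`. -/
def RankPrefers {C : Type*} (rank : C → ℕ) (S₁ S₂ : Finset C) : Prop :=
  ∃ c ∈ S₂, ∀ c' ∈ S₁, rank c < rank c'

/-- `V(S,S')`: number of voters strictly preferring `S'` to `S`. -/
noncomputable def Vrank {C : Type*} (n : ℕ) (rank : Fin n → C → ℕ)
    (S S' : Finset C) : ℕ :=
  Nat.card {v : Fin n // RankPrefers (rank v) S S'}

lemma Nat.card_subtype_exists_mem_le_sum {ι α : Type*} (t : Finset ι) (P : ι → α → Prop) :
    Nat.card {a // ∃ i ∈ t, P i a} ≤ ∑ i ∈ t, Nat.card {a // P i a} := by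
  have hunion : {a | ∃ i ∈ t, P i a} = ⋃ i ∈ t, {a | P i a} := by ext; simp
  have := t.set_ncard_biUnion_le fun i => {a | P i a}
  rwa [← hunion] at this

lemma rankPrefers_iff_exists_rankPrefers_singleton {C : Type*} (rank : C → ℕ)
    (S S' : Finset C) : RankPrefers rank S S' ↔ ∃ j ∈ S', RankPrefers rank S {j} := by
  simp [RankPrefers]

lemma Vrank_le_sum_Vrank_singleton {C : Type*} (n : ℕ) (rank : Fin n → C → ℕ)
    (S S' : Finset C) :
    Vrank n rank S S' ≤ ∑ j ∈ S', Vrank n rank S {j} := by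
  rw [Vrank, Nat.card_congr <| Equiv.subtypeEquivRight fun v =>
    rankPrefers_iff_exists_rankPrefers_singleton (rank v) S S']
  exact Nat.card_subtype_exists_mem_le_sum S' fun j v => RankPrefers (rank v) S {j}

lemma sum_mul_Vrank_le_sum_sum_mul_Vrank_singleton {C : Type*} (n : ℕ)
    (rank : Fin n → C → ℕ) (𝒮 : Finset (Finset C)) (w : Finset C → ℝ)
    (hw0 : ∀ S ∈ 𝒮, 0 ≤ w S) (S' : Finset C) :
    ∑ S ∈ 𝒮, w S * (Vrank n rank S S' : ℝ) ≤
      ∑ j ∈ S', ∑ S ∈ 𝒮, w S * (Vrank n rank S {j} : ℝ) := by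
  rw [Finset.sum_comm]
  gcongr with S hS
  rw [← Finset.mul_sum]
  exact mul_le_mul_of_nonneg_left (mod_cast Vrank_le_sum_Vrank_singleton n rank S S') (hw0 S hS)

theorem ranking_lottery_stable_iff_one_stable_general {C : Type*}
    (n K : ℕ) (hK : 0 < K) (rank : Fin n → C → ℕ)
    (𝒮 : Finset (Finset C)) (w : Finset C → ℝ)
    (hw0 : ∀ S ∈ 𝒮, 0 ≤ w S) :
    (∀ j : C, ∑ S ∈ 𝒮, w S * (Vrank n rank S {j} : ℝ) < (n : ℝ) / K) ↔
    (∀ S' : Finset C, S'.Nonempty → S'.card ≤ K →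
      ∑ S ∈ 𝒮, w S * (Vrank n rank S S' : ℝ) < ((S'.card : ℝ) / K) * n) := by
  refine ⟨fun h S' hne _ => ?_, fun h j => ?_⟩
  · calc ∑ S ∈ 𝒮, w S * (Vrank n rank S S' : ℝ)
        ≤ ∑ j ∈ S', ∑ S ∈ 𝒮, w S * (Vrank n rank S {j} : ℝ) :=
          sum_mul_Vrank_le_sum_sum_mul_Vrank_singleton n rank 𝒮 w hw0 S'
      _ < ∑ _j ∈ S', (n : ℝ) / K := Finset.sum_lt_sum_of_nonempty hne fun j _ => h j
      _ = ((S'.card : ℝ) / K) * n := by rw [Finset.sum_const, nsmul_eq_mul]; ring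
  · simpa [div_eq_inv_mul] using h {j} (Finset.singleton_nonempty j)
      ((Finset.card_singleton j).trans_le hK)

/-- In the Ranking setting, a lottery `Δ` (finitely supported weights `w` on a
support `𝒮` of size-`K` committees) is stable iff it is `1`-stable: if
`E_{S∼Δ}[V(S,{j})] < n/K` for every candidate `j`, then
`E_{S∼Δ}[V(S,S')] < (|S'|/K)·n` for every nonempty `S'` of size at most `K`. -/
theorem ranking_lottery_stable_iff_one_stable {C : Type*} [Fintype C]
    (n K : ℕ) (hK : 0 < K) (rank : Fin n → C → ℕ)
    (hinj : ∀ v, Function.Injective (rank v))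
    (𝒮 : Finset (Finset C)) (w : Finset C → ℝ)
    (hw0 : ∀ S ∈ 𝒮, 0 ≤ w S) (hw1 : ∑ S ∈ 𝒮, w S = 1)
    (hsize : ∀ S ∈ 𝒮, S.card = K) :
    (∀ j : C, ∑ S ∈ 𝒮, w S * (Vrank n rank S {j} : ℝ) < (n : ℝ) / K) ↔
    (∀ S' : Finset C, S'.Nonempty → S'.card ≤ K →
      ∑ S ∈ 𝒮, w S * (Vrank n rank S S' : ℝ) < ((S'.card : ℝ) / K) * n) :=
  ranking_lottery_stable_iff_one_stable_general n K hK rank 𝒮 w hw0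
end

section
/- In the Approval Set setting with K = 3: suppose S = {a,b} is a committee of size 2 with n₂(S) > n/3 (more than n/3 voters approve both a and b), and c is a candidate such that at least n/3 voters approve c but approve neither a nor b. Then the committee T = {a,b,c} admits no blocking committee of size 1 or 2; i.e., for every nonempty S' with |S'| ≤ 2, V(T,S') < (|S'|/3)·n. -/
/-!
A voter who already approves at least `|S'|` members of `T` cannot prefer `S'` to `T`. For
`T = {a, b, c}` this rules out the more than `n/3` voters approving `a` and `b` when `|S'| ≤ 2`,
and additionally the at least `n/3` voters approving `c` alone when `|S'| = 1`; the remaining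
voters number fewer than `2n/3`, resp. `n/3`.
-/

/-- `V(S,S')` in the Approval Set model. -/
noncomputable def Vappr {C : Type*} [DecidableEq C] (n : ℕ)
    (A : Fin n → Finset C) (S S' : Finset C) : ℕ :=
  Nat.card {v : Fin n // (S ∩ A v).card < (S' ∩ A v).card}

open Finset

section Approval

variable {C : Type*} [DecidableEq C] {n : ℕ} (A : Fin n → Finset C)

lemma Vappr_eq_card_filter (S S' : Finset C) :
    Vappr n A S S' = #{v | (S ∩ A v).card < (S' ∩ A v).card} := by
  simp only [Vappr, Nat.card_eq_fintype_card, Fintype.card_subtype]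

lemma Vappr_add_card_le {T S' : Finset C} {k : ℕ} (hk : S'.card ≤ k) :
    Vappr n A T S' + #{v | k ≤ (T ∩ A v).card} ≤ n := by
  rw [Vappr_eq_card_filter, ← card_union_of_disjoint]
  · exact (card_le_univ _).trans_eq (Fintype.card_fin n)
  · refine disjoint_filter.2 fun v _ hlt hle => ?_
    have := card_le_card (inter_subset_left : S' ∩ A v ⊆ S')
    omega

end Approval

lemma two_le_card_inter_of_mem {C : Type*} [DecidableEq C] {a b : C} {T X : Finset C}
    (hab : a ≠ b) (haT : a ∈ T) (hbT : b ∈ T) (haX : a ∈ X) (hbX : b ∈ X) :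
    2 ≤ (T ∩ X).card := by
  calc 2 = ({a, b} : Finset C).card := (card_pair hab).symm
    _ ≤ (T ∩ X).card := card_le_card (by simp [insert_subset_iff, *])

theorem case_one_no_small_blockers_general {C : Type*} [DecidableEq C]
    (n : ℕ) (A : Fin n → Finset C) (a b c : C)
    (hab : a ≠ b)
    (h2 : (n : ℝ) / 3 < (Nat.card {v : Fin n // a ∈ A v ∧ b ∈ A v} : ℝ))
    (hc : (n : ℝ) / 3 ≤
      (Nat.card {v : Fin n // c ∈ A v ∧ a ∉ A v ∧ b ∉ A v} : ℝ)) :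
    ∀ S' : Finset C, S'.Nonempty → S'.card ≤ 2 →
      (Vappr n A {a, b, c} S' : ℝ) < ((S'.card : ℝ) / 3) * n := by
  intro S' hne hcard
  simp only [Nat.card_eq_fintype_card, Fintype.card_subtype] at h2 hc
  have hpair : ∀ v, a ∈ A v ∧ b ∈ A v → 2 ≤ ({a, b, c} ∩ A v).card := fun v hv =>
    two_le_card_inter_of_mem hab (by simp) (by simp) hv.1 hv.2
  have hblock := Vappr_add_card_le A (T := {a, b, c}) (le_refl S'.card)
  obtain hS' | hS' : S'.card = 1 ∨ S'.card = 2 := by have := hne.card_pos; omega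
  · rw [hS'] at hblock ⊢
    have hsplit : #{v | a ∈ A v ∧ b ∈ A v} + #{v | c ∈ A v ∧ a ∉ A v ∧ b ∉ A v} ≤
        #{v | 1 ≤ ({a, b, c} ∩ A v).card} := by
      rw [← card_union_of_disjoint (disjoint_filter.2 fun v _ hv hv' => hv'.2.1 hv.1),
        ← filter_or]
      refine card_le_card (monotone_filter_right _ fun v _ hv => ?_)
      rcases hv with hv | hv
      · exact one_le_two.trans (hpair v hv)
      · exact card_pos.2 ⟨c, by simp [hv.1]⟩
    have hcount : (Vappr n A {a, b, c} S' : ℝ) + #{v | a ∈ A v ∧ b ∈ A v} +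
        #{v | c ∈ A v ∧ a ∉ A v ∧ b ∉ A v} ≤ n := by exact_mod_cast by omega
    linarith
  · rw [hS'] at hblock ⊢
    have hcover : #{v | a ∈ A v ∧ b ∈ A v} ≤ #{v | 2 ≤ ({a, b, c} ∩ A v).card} :=
      card_le_card (monotone_filter_right _ fun v _ => hpair v)
    have hcount : (Vappr n A {a, b, c} S' : ℝ) + #{v | a ∈ A v ∧ b ∈ A v} ≤ n := by
      exact_mod_cast by omega
    linarith

/-- Approval Set setting, `K = 3`, Case (1): if more than `n/3` voters approve
both `a` and `b`, and at least `n/3` voters approve `c` but neither `a` nor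
`b`, then `T = {a,b,c}` admits no blocking committee of size 1 or 2. -/
theorem case_one_no_small_blockers {C : Type*} [Fintype C] [DecidableEq C]
    (n : ℕ) (A : Fin n → Finset C) (a b c : C)
    (hab : a ≠ b) (hac : a ≠ c) (hbc : b ≠ c)
    (h2 : (n : ℝ) / 3 < (Nat.card {v : Fin n // a ∈ A v ∧ b ∈ A v} : ℝ))
    (hc : (n : ℝ) / 3 ≤
      (Nat.card {v : Fin n // c ∈ A v ∧ a ∉ A v ∧ b ∉ A v} : ℝ)) :
    ∀ S' : Finset C, S'.Nonempty → S'.card ≤ 2 →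
      (Vappr n A {a, b, c} S' : ℝ) < ((S'.card : ℝ) / 3) * n :=
  case_one_no_small_blockers_general n A a b c hab h2 hc
end
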